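/- (Effect inclusion lifting) If Q is stateless and Effects(T ∥ Q*) ⊆ Effects(Q*) holds for every thread T of the program P, then Effects(P) ⊆ Effects(P ∥ Q*) ⊆ Effects(Q*). -/
import Mathlib


namespace Paper

/-- Threads of the core language. -/
inductive Thread (C : Type) : Type where
  | prim : C → Thread C
  | skip : Thread C
  | seq : Thread C → Thread C → Thread C
  | choice : Thread C → Thread C → Thread C
  | star : Thread C → Thread C
  | atomic : Thread C → Thread C

/-- Heaps: partial maps from variables and addresses to naturals. -/
abbrev Heap := (String ⊕ ℕ) → Option ℕ

def emp : Heap := fun _ => none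

/-- Memory-cell (address) part of the domain of a heap. -/
def addrDom (h : Heap) : Set ℕ := {a | h (Sum.inr a) ≠ none}

/-- Disjointness on memory cells. -/
def Disj (h₁ h₂ : Heap) : Prop := addrDom h₁ ∩ addrDom h₂ = ∅

abbrev Config (C : Type) := Thread C × Heap

/-- Thread-configuration maps (partial over thread identifiers). -/
abbrev Cf (C : Type) := ℕ → Option (Config C)

/-- A state (s, cf) is separated. -/
def Separated {C : Type} (s : Heap) (cf : Cf C) : Prop :=
  (∀ i c, cf i = some c → Disj s c.2) ∧
  (∀ i j ci cj, i ≠ j → cf i = some ci → cf j = some cj → Disj ci.2 cj.2)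

variable {C : Type}

mutual
  /-- Sequential small-step semantics, parameterized by the semantics `prim`
  of primitive commands (relating shared/owned heaps before and after). -/
  inductive SeqStep (prim : C → Heap → Heap → Heap → Heap → Prop) :
      Heap → Config C → Heap → Config C → Prop where
    | primStep {c s o s' o'} : prim c s o s' o' →
        SeqStep prim s (Thread.prim c, o) s' (Thread.skip, o')
    | seqL {s T₁ o s' T₁' o'} (T₂ : Thread C) :
        SeqStep prim s (T₁, o) s' (T₁', o') →
        SeqStep prim s (Thread.seq T₁ T₂, o) s' (Thread.seq T₁' T₂, o')
    | seqSkip {s o} (T : Thread C) :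
        SeqStep prim s (Thread.seq Thread.skip T, o) s (T, o)
    | choiceL {s T₁ o s' T₁' o'} (T₂ : Thread C) :
        SeqStep prim s (T₁, o) s' (T₁', o') →
        SeqStep prim s (Thread.choice T₁ T₂, o) s' (T₁', o')
    | choiceR {s T₂ o s' T₂' o'} (T₁ : Thread C) :
        SeqStep prim s (T₂, o) s' (T₂', o') →
        SeqStep prim s (Thread.choice T₁ T₂, o) s' (T₂', o')
    | starUnfold {s o} (T : Thread C) :
        SeqStep prim s (Thread.star T, o) s (Thread.seq T (Thread.star T), o)
    | starExit {s o} (T : Thread C) :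
        SeqStep prim s (Thread.star T, o) s (Thread.skip, o)
    | atomic {s T o s' o'} :
        SeqSteps prim s (T, o) s' (Thread.skip, o') →
        SeqStep prim s (Thread.atomic T, o) s' (Thread.skip, o')

  /-- Finitely many sequential steps. -/
  inductive SeqSteps (prim : C → Heap → Heap → Heap → Heap → Prop) :
      Heap → Config C → Heap → Config C → Prop where
    | refl {s c} : SeqSteps prim s c s c
    | step {s c s' c' s'' c''} : SeqStep prim s c s' c' →
        SeqSteps prim s' c' s'' c'' → SeqSteps prim s c s'' c''
end

variable (prim : C → Heap → Heap → Heap → Heap → Prop)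

/-- Parallel (program) step: one thread steps sequentially and the
resulting state must be separated. -/
def ParStep (st st' : Heap × Cf C) : Prop :=
  ∃ i c c', st.2 i = some c ∧ SeqStep prim st.1 c st'.1 c' ∧
    st'.2 = Function.update st.2 i (some c') ∧ Separated st'.1 st'.2

def ParSteps : Heap × Cf C → Heap × Cf C → Prop :=
  Relation.ReflTransGen (ParStep prim)

/-- A program is a parallel composition of finitely many threads. -/
abbrev Program (C : Type) := List (Thread C)

/-- `Q*` : Kleene star applied to every thread. -/
def starP (P : Program C) : Program C := P.map Thread.star

/-- Initial thread configurations: each thread with the empty owned heap. -/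
def cfInit (P : Program C) : Cf C := fun i => (P[i]?).map fun T => (T, emp)

/-- Reachable shared heaps of a program from initial shared heap `sinit`. -/
def Reach (sinit : Heap) (P : Program C) : Set Heap :=
  {s | ∃ cf, ParSteps prim (sinit, cfInit P) (s, cf)}

/-- Effects: single-step shared-heap updates along executions. -/
def Effects (sinit : Heap) (P : Program C) : Set (Heap × Heap) :=
  {p | ∃ cf cf', ParSteps prim (sinit, cfInit P) (p.1, cf) ∧
       ParStep prim (p.1, cf) (p.2, cf')}

/-- Statelessness: every thread of `Q`, from any shared heap reachable by `Q*`
with empty owned heap, steps in one step to `(skip, emp)`. -/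
def Stateless (sinit : Heap) (Q : Program C) : Prop :=
  ∀ T ∈ Q, ∀ s ∈ Reach prim sinit (starP Q), ∀ s' c,
    SeqStep prim s (T, emp) s' c → c = (Thread.skip, emp)

/-- Assumption 1: sequential steps preserve separation. -/
def PreservesSep : Prop :=
  ∀ s c s' c', SeqStep prim s c s' c' → Disj s c.2 → Disj s' c'.2

/-- `Q` is a stateless effect summary of `P`. -/
def IsSummary (sinit : Heap) (P Q : Program C) : Prop :=
  Stateless prim sinit Q ∧
  ∀ T ∈ P, Effects prim sinit (T :: starP Q) ⊆ Effects prim sinit (starP Q)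

/-- Sequential-step successors of a set of views. -/
def post (X : Set (Heap × Config C)) : Set (Heap × Config C) :=
  {v' | ∃ v ∈ X, SeqStep prim v.1 v.2 v'.1 v'.2}

/-- Interference successors: replace the shared heap of a view by the result
of one step of the summary `Q` from its initial configuration, subject to
separation of the resulting view. -/
def env (Q : Program C) (X : Set (Heap × Config C)) : Set (Heap × Config C) :=
  {v' | Disj v'.1 v'.2.2 ∧ ∃ s cf', (s, v'.2) ∈ X ∧
        ParStep prim (s, cfInit Q) (v'.1, cf')}

/-- Initial views. -/
def X₀ (sinit : Heap) (P : Program C) : Set (Heap × Config C) :=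
  {v | v.1 = sinit ∧ ∃ T ∈ P, v.2 = (T, emp)}

/-- The least fixed point of the thread-modular analysis with interference
computed by the candidate summary `Q`. -/
def Fix (sinit : Heap) (P Q : Program C) : Set (Heap × Config C) :=
  ⋂₀ {X | X₀ sinit P ⊆ X ∧ post prim X ⊆ X ∧ env prim Q X ⊆ X}

/-- Shared heaps occurring in the fixed point. -/
def FixHeaps (sinit : Heap) (P Q : Program C) : Set Heap :=
  {s | ∃ c, (s, c) ∈ Fix prim sinit P Q}

/-! ### Helper lemmas -/

lemma addrDom_emp : addrDom emp = ∅ := by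
  ext a; simp [addrDom, emp]

lemma Disj_emp_right (h : Heap) : Disj h emp := by
  simp [Disj, addrDom_emp]

lemma Disj_emp_left (h : Heap) : Disj emp h := by
  simp [Disj, addrDom_emp]

lemma sep_thread0 {s : Heap} {cf : Cf C}
    (h0 : ∀ c, cf 0 = some c → Disj s c.2)
    (hrest : ∀ j c, 0 < j → cf j = some c → c.2 = emp) :
    Separated s cf := by
  constructor
  · intro i c hc
    rcases Nat.eq_zero_or_pos i with hi | hi
    · exact h0 c (hi ▸ hc)
    · rw [hrest i c hi hc]; exact Disj_emp_right s
  · intro i j ci cj hij hci hcj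
    rcases Nat.eq_zero_or_pos j with hj | hj
    · rcases Nat.eq_zero_or_pos i with hi | hi
      · exact absurd (hi.trans hj.symm) hij
      · rw [hrest i ci hi hci]; exact Disj_emp_left _
    · rw [hrest j cj hj hcj]; exact Disj_emp_right _

lemma sep_allemp {s : Heap} {cf : Cf C}
    (h : ∀ i c, cf i = some c → c.2 = emp) : Separated s cf :=
  sep_thread0 (fun c hc => by rw [h 0 c hc]; exact Disj_emp_right s)
    (fun j c _ hc => h j c hc)

lemma sep_update_emp {s : Heap} {cf : Cf C} (h : Separated s cf) (j : ℕ) (t : Thread C) :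
    Separated s (Function.update cf j (some (t, emp))) := by
  constructor
  · intro i c hc
    by_cases hij : i = j
    · subst hij; rw [Function.update_self] at hc; cases hc; exact Disj_emp_right s
    · rw [Function.update_of_ne hij] at hc; exact h.1 i c hc
  · intro i k ci ck hik hci hck
    by_cases hij : i = j
    · subst hij; rw [Function.update_self] at hci; cases hci; exact Disj_emp_left _
    · rw [Function.update_of_ne hij] at hci
      by_cases hkj : k = j
      · subst hkj; rw [Function.update_self] at hck; cases hck; exact Disj_emp_right _
      · rw [Function.update_of_ne hkj] at hck; exact h.2 i k ci ck hik hci hck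

/-- The four possible shapes of a `Q*` thread configuration. -/
def Shape (T : Thread C) (c : Config C) : Prop :=
  c = (Thread.star T, emp) ∨ c = (Thread.seq T (Thread.star T), emp) ∨
  c = (Thread.seq Thread.skip (Thread.star T), emp) ∨ c = (Thread.skip, emp)

lemma skip_no_step {s s' : Heap} {o : Heap} {c' : Config C}
    (h : SeqStep prim s (Thread.skip, o) s' c') : False := by
  cases h

lemma shape_step {sinit : Heap} {Q : Program C} (hQ : Stateless prim sinit Q)
    {s s' : Heap} {T : Thread C} (hT : T ∈ Q)
    (hs : s ∈ Reach prim sinit (starP Q)) {c c' : Config C}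
    (hsh : Shape T c) (hstep : SeqStep prim s c s' c') :
    Shape T c' ∧ (s' = s ∨ SeqStep prim s (T, emp) s' (Thread.skip, emp)) := by
  rcases hsh with h | h | h | h <;> subst h
  · cases hstep
    · exact ⟨Or.inr (Or.inl rfl), Or.inl rfl⟩
    · exact ⟨Or.inr (Or.inr (Or.inr rfl)), Or.inl rfl⟩
  · cases hstep with
    | seqL _ hsub =>
        have h := hQ T hT s hs _ _ hsub
        injection h with h1 h2
        subst h1; subst h2
        exact ⟨Or.inr (Or.inr (Or.inl rfl)), Or.inr hsub⟩
    | seqSkip => exact ⟨Or.inl rfl, Or.inl rfl⟩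
  · cases hstep with
    | seqL _ hsub => exact absurd hsub (skip_no_step prim)
    | seqSkip => exact ⟨Or.inl rfl, Or.inl rfl⟩
  · exact absurd hstep (skip_no_step prim)
lemma cfInit_starP (Q : Program C) (j : ℕ) :
    cfInit (starP Q) j = (Q[j]?).map (fun T => (Thread.star T, emp)) := by
  simp only [cfInit, starP, List.getElem?_map, Option.map_map]
  rfl

lemma cfInit_emp {P : Program C} {j : ℕ} {c : Config C}
    (h : cfInit P j = some c) : c.2 = emp := by
  simp only [cfInit, Option.map_eq_some_iff] at h
  obtain ⟨T, _, rfl⟩ := h; rfl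

lemma allemp_update {cf : Cf C}
    (h : ∀ i c, cf i = some c → c.2 = emp) (j : ℕ) (t : Thread C) :
    ∀ i c, Function.update cf j (some (t, emp)) i = some c → c.2 = emp := by
  intro i c hc
  by_cases hij : i = j
  · subst hij; rw [Function.update_self] at hc; cases hc; rfl
  · rw [Function.update_of_ne hij] at hc; exact h i c hc

/-- Realize one stateless-summary step and return to the same configuration. -/
lemma perform {s s' : Heap} {cf : Cf C} {j : ℕ} {T : Thread C}
    (hj : cf j = some (Thread.star T, emp))
    (hstep : SeqStep prim s (T, emp) s' (Thread.skip, emp))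
    (hsep : Separated s cf) (hsep' : Separated s' cf) :
    ParSteps prim (s, cf) (s', cf) := by
  have h1 : ParStep prim (s, cf)
      (s, Function.update cf j (some (Thread.seq T (Thread.star T), emp))) :=
    ⟨j, _, _, hj, SeqStep.starUnfold T, rfl, sep_update_emp hsep j _⟩
  have h2 : ParStep prim
      (s, Function.update cf j (some (Thread.seq T (Thread.star T), emp)))
      (s', Function.update cf j (some (Thread.seq Thread.skip (Thread.star T), emp))) :=
    ⟨j, _, _, Function.update_self .., SeqStep.seqL _ hstep,
      (Function.update_idem ..).symm, sep_update_emp hsep' j _⟩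
  have h3 : ParStep prim
      (s', Function.update cf j (some (Thread.seq Thread.skip (Thread.star T), emp)))
      (s', cf) := by
    refine ⟨j, _, _, Function.update_self .., SeqStep.seqSkip _, ?_, hsep'⟩
    show cf = Function.update _ j _
    rw [Function.update_idem]
    conv_lhs => rw [← Function.update_eq_self j cf]
    rw [hj]
  exact ((Relation.ReflTransGen.single h3).head h2).head h1

/-- Any run of `Q*` keeps all threads in one of the four shapes, and the
same shared heap is reachable with all threads at their initial config. -/
lemma qmaster {sinit : Heap} {Q : Program C} (hQ : Stateless prim sinit Q)
    {st : Heap × Cf C}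
    (hrun : ParSteps prim (sinit, cfInit (starP Q)) st) :
    (∀ i c, st.2 i = some c → ∃ T, Q[i]? = some T ∧ Shape T c) ∧
    ParSteps prim (sinit, cfInit (starP Q)) (st.1, cfInit (starP Q)) := by
  induction hrun with
  | refl =>
      refine ⟨?_, Relation.ReflTransGen.refl⟩
      intro i c hc
      have hc : cfInit (starP Q) i = some c := hc
      rw [cfInit_starP] at hc
      simp only [Option.map_eq_some_iff] at hc
      obtain ⟨T, hT, rfl⟩ := hc
      exact ⟨T, hT, Or.inl rfl⟩
  | tail hab hbc ih =>
      rename_i stb stc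
      obtain ⟨s, cf⟩ := stb
      obtain ⟨s2, cf2⟩ := stc
      obtain ⟨ihsh, ihA⟩ := ih
      obtain ⟨i, c, c', hci, hseq, hupd, hsep'⟩ := hbc
      obtain ⟨T, hTi, hsh⟩ := ihsh i c hci
      have hTQ : T ∈ Q := List.mem_of_getElem? hTi
      have hreach : _ ∈ Reach prim sinit (starP Q) := ⟨_, ihA⟩
      obtain ⟨hsh', heff⟩ := shape_step prim hQ hTQ hreach hsh hseq
      constructor
      · intro k ck hck
        rw [hupd] at hck
        by_cases hk : k = i
        · subst hk; rw [Function.update_self] at hck; cases hck; exact ⟨T, hTi, hsh'⟩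
        · rw [Function.update_of_ne hk] at hck; exact ihsh k ck hck
      · rcases heff with rfl | hstepT
        · exact ihA
        · refine ihA.trans (perform prim (j := i) ?_ hstepT ?_ ?_)
          · rw [cfInit_starP, hTi]; rfl
          · exact sep_allemp (fun k ck hck => cfInit_emp hck)
          · exact sep_allemp (fun k ck hck => cfInit_emp hck)
/-- Characterization of the effects of `Q*`. -/
lemma effects_char {sinit : Heap} {Q : Program C} (hQ : Stateless prim sinit Q)
    {s s' : Heap} (h : (s, s') ∈ Effects prim sinit (starP Q)) :
    ParSteps prim (sinit, cfInit (starP Q)) (s, cfInit (starP Q)) ∧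
    (s' = s ∨ ∃ T ∈ Q, SeqStep prim s (T, emp) s' (Thread.skip, emp)) := by
  obtain ⟨cf, cf', hrun, i, c, c', hci, hseq, _, _⟩ := h
  obtain ⟨hshapes, hA⟩ := qmaster prim hQ hrun
  obtain ⟨T, hTi, hsh⟩ := hshapes i c hci
  have hTQ : T ∈ Q := List.mem_of_getElem? hTi
  refine ⟨hA, ?_⟩
  have := shape_step prim hQ hTQ ⟨_, hA⟩ hsh hseq
  rcases this.2 with h | h
  · exact Or.inl h
  · exact Or.inr ⟨T, hTQ, h⟩

lemma canonPreserve {sinit : Heap} {Q : Program C} {s s' : Heap}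
    (hA : ParSteps prim (sinit, cfInit (starP Q)) (s, cfInit (starP Q)))
    (heff : s' = s ∨ ∃ T ∈ Q, SeqStep prim s (T, emp) s' (Thread.skip, emp)) :
    ParSteps prim (sinit, cfInit (starP Q)) (s', cfInit (starP Q)) := by
  rcases heff with rfl | ⟨T, hTQ, hstepT⟩
  · exact hA
  · obtain ⟨j, hj⟩ := List.mem_iff_getElem?.mp hTQ
    refine hA.trans (perform prim (j := j) ?_ hstepT ?_ ?_)
    · rw [cfInit_starP, hj]; rfl
    · exact sep_allemp (fun k ck hck => cfInit_emp hck)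
    · exact sep_allemp (fun k ck hck => cfInit_emp hck)

/-- Preservation of a single-thread view under a summary effect. -/
lemma viewPreserve {sinit : Heap} {Q : Program C} (T₀ : Thread C)
    {s s' : Heap} {cfT : Cf C} {c : Config C}
    (hrun : ParSteps prim (sinit, cfInit (T₀ :: starP Q)) (s, cfT))
    (h0 : cfT 0 = some c)
    (hcan : ∀ j, 0 < j → cfT j = cfInit (T₀ :: starP Q) j)
    (hds : Disj s c.2) (hds' : Disj s' c.2)
    (heff : s' = s ∨ ∃ T' ∈ Q, SeqStep prim s (T', emp) s' (Thread.skip, emp)) :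
    ParSteps prim (sinit, cfInit (T₀ :: starP Q)) (s', cfT) := by
  rcases heff with rfl | ⟨T', hT'Q, hstepT⟩
  · exact hrun
  · obtain ⟨j, hj⟩ := List.mem_iff_getElem?.mp hT'Q
    have hrest : ∀ k ck, 0 < k → cfT k = some ck → ck.2 = emp := by
      intro k ck hk hck
      rw [hcan k hk] at hck
      exact cfInit_emp hck
    have hjc : cfT (j + 1) = some (Thread.star T', emp) := by
      rw [hcan (j + 1) (Nat.succ_pos j)]
      show cfInit (T₀ :: starP Q) (j+1) = _
      simp only [cfInit, List.getElem?_cons_succ]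
      rw [starP, List.getElem?_map, hj]
      rfl
    have h0' : ∀ c₂, cfT 0 = some c₂ → c₂ = c := by
      intro c₂ h₂; rw [h0] at h₂; exact (Option.some_inj.mp h₂).symm
    refine hrun.trans (perform prim (j := j + 1) hjc hstepT ?_ ?_)
    · exact sep_thread0 (fun c₂ h₂ => (h0' c₂ h₂) ▸ hds) hrest
    · exact sep_thread0 (fun c₂ h₂ => (h0' c₂ h₂) ▸ hds') hrest

lemma effect_triv {sinit : Heap} {Q : Program C} {s : Heap}
    (hA : ParSteps prim (sinit, cfInit (starP Q)) (s, cfInit (starP Q)))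
    {j : ℕ} {T : Thread C} (hj : Q[j]? = some T) :
    (s, s) ∈ Effects prim sinit (starP Q) := by
  have hjc : cfInit (starP Q) j = some (Thread.star T, emp) := by
    rw [cfInit_starP, hj]; rfl
  exact ⟨_, Function.update (cfInit (starP Q)) j (some (Thread.seq T (Thread.star T), emp)),
    hA, j, _, _, hjc, SeqStep.starUnfold T, rfl,
    sep_allemp (allemp_update (fun k ck hck => cfInit_emp hck) j _)⟩

lemma effect_real {sinit : Heap} {Q : Program C} {s s' : Heap}
    (hA : ParSteps prim (sinit, cfInit (starP Q)) (s, cfInit (starP Q)))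
    {T : Thread C} (hT : T ∈ Q)
    (hstep : SeqStep prim s (T, emp) s' (Thread.skip, emp)) :
    (s, s') ∈ Effects prim sinit (starP Q) := by
  obtain ⟨j, hj⟩ := List.mem_iff_getElem?.mp hT
  have hjc : cfInit (starP Q) j = some (Thread.star T, emp) := by
    rw [cfInit_starP, hj]; rfl
  have hemp0 : ∀ k ck, cfInit (starP Q) k = some ck → ck.2 = emp :=
    fun k ck hck => cfInit_emp hck
  have step1 : ParStep prim (s, cfInit (starP Q))
      (s, Function.update (cfInit (starP Q)) j (some (Thread.seq T (Thread.star T), emp))) :=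
    ⟨j, _, _, hjc, SeqStep.starUnfold T, rfl, sep_allemp (allemp_update hemp0 j _)⟩
  have step2 : ParStep prim
      (s, Function.update (cfInit (starP Q)) j (some (Thread.seq T (Thread.star T), emp)))
      (s', Function.update (Function.update (cfInit (starP Q)) j
            (some (Thread.seq T (Thread.star T), emp))) j
            (some (Thread.seq Thread.skip (Thread.star T), emp))) :=
    ⟨j, _, _, Function.update_self .., SeqStep.seqL _ hstep, rfl,
      sep_allemp (allemp_update (allemp_update hemp0 j _) j _)⟩
  exact ⟨_, _, hA.tail step1, step2⟩
/-- The master invariant of runs of `P ∥ Q*`. -/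
def MInv (sinit : Heap) (P Q : Program C) (s : Heap) (cf : Cf C) : Prop :=
  ParSteps prim (sinit, cfInit (starP Q)) (s, cfInit (starP Q)) ∧
  Separated s cf ∧
  (∀ i c, cf i = some c → P.length ≤ i →
    ∃ T, Q[i - P.length]? = some T ∧ Shape T c) ∧
  (∀ i c, cf i = some c → i < P.length →
    ∃ T, P[i]? = some T ∧ ∃ cfT,
      ParSteps prim (sinit, cfInit (T :: starP Q)) (s, cfT) ∧ cfT 0 = some c ∧
      ∀ j, 0 < j → cfT j = cfInit (T :: starP Q) j)

lemma minv_step {sinit : Heap} {P Q : Program C} (hQ : Stateless prim sinit Q)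
    (hinc : ∀ T ∈ P, Effects prim sinit (T :: starP Q) ⊆ Effects prim sinit (starP Q))
    {s s' : Heap} {cf cf' : Cf C} (hinv : MInv prim sinit P Q s cf)
    (hstep : ParStep prim (s, cf) (s', cf')) :
    (s, s') ∈ Effects prim sinit (starP Q) ∧ MInv prim sinit P Q s' cf' := by
  obtain ⟨hA, hsep, hC, hB⟩ := hinv
  obtain ⟨i, c, c', hci, hseq, hupd, hsep'⟩ := hstep
  replace hci : cf i = some c := hci
  replace hseq : SeqStep prim s c s' c' := hseq
  replace hupd : cf' = Function.update cf i (some c') := hupd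
  replace hsep' : Separated s' cf' := hsep'
  rcases lt_or_ge i P.length with hi | hi
  · -- a step of a thread of `P`
    obtain ⟨T, hTi, cfT, hrunT, hcfT0, hcan⟩ := hB i c hci hi
    have hTP : T ∈ P := List.mem_of_getElem? hTi
    have hc'd : Disj s' c'.2 := by
      have h : cf' i = some c' := by rw [hupd]; exact Function.update_self ..
      exact hsep'.1 i c' h
    have hstepT : ParStep prim (s, cfT) (s', Function.update cfT 0 (some c')) := by
      refine ⟨0, c, c', hcfT0, hseq, rfl, ?_⟩
      refine sep_thread0 ?_ ?_
      · intro c₂ h₂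
        replace h₂ : Function.update cfT 0 (some c') 0 = some c₂ := h₂
        rw [Function.update_self] at h₂; cases h₂
        show Disj s' c'.2
        exact hc'd
      · intro j cj hj hcj
        replace hcj : Function.update cfT 0 (some c') j = some cj := hcj
        rw [Function.update_of_ne (Nat.pos_iff_ne_zero.mp hj), hcan j hj] at hcj
        exact cfInit_emp hcj
    have heffQ : (s, s') ∈ Effects prim sinit (starP Q) :=
      hinc T hTP ⟨cfT, _, hrunT, hstepT⟩
    have hchar := effects_char prim hQ heffQ
    refine ⟨heffQ, canonPreserve prim hA hchar.2, hsep', ?_, ?_⟩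
    · intro k ck hck hk
      have hki : k ≠ i := by omega
      rw [hupd, Function.update_of_ne hki] at hck
      exact hC k ck hck hk
    · intro k ck hck hk
      by_cases hki : k = i
      · subst hki
        rw [hupd, Function.update_self] at hck
        cases hck
        refine ⟨T, hTi, Function.update cfT 0 (some c'), hrunT.tail hstepT,
          Function.update_self .., ?_⟩
        intro j hj
        rw [Function.update_of_ne (Nat.pos_iff_ne_zero.mp hj)]
        exact hcan j hj
      · rw [hupd, Function.update_of_ne hki] at hck
        obtain ⟨Tk, hTk, cfTk, hrunk, h0k, hcank⟩ := hB k ck hck hk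
        refine ⟨Tk, hTk, cfTk, ?_, h0k, hcank⟩
        refine viewPreserve prim Tk hrunk h0k hcank (hsep.1 k ck hck) ?_ hchar.2
        have h : cf' k = some ck := by
          rw [hupd, Function.update_of_ne hki]; exact hck
        exact hsep'.1 k ck h
  · -- a step of a thread of `Q*`
    obtain ⟨T, hTi, hsh⟩ := hC i c hci hi
    have hTQ : T ∈ Q := List.mem_of_getElem? hTi
    obtain ⟨hsh', heff1⟩ := shape_step prim hQ hTQ ⟨_, hA⟩ hsh hseq
    have heffalt : s' = s ∨ ∃ T' ∈ Q, SeqStep prim s (T', emp) s' (Thread.skip, emp) := by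
      rcases heff1 with h | h
      · exact Or.inl h
      · exact Or.inr ⟨T, hTQ, h⟩
    have heffQ : (s, s') ∈ Effects prim sinit (starP Q) := by
      rcases heff1 with rfl | h
      · exact effect_triv prim hA hTi
      · exact effect_real prim hA hTQ h
    refine ⟨heffQ, canonPreserve prim hA heffalt, hsep', ?_, ?_⟩
    · intro k ck hck hk
      by_cases hki : k = i
      · subst hki
        rw [hupd, Function.update_self] at hck
        cases hck
        exact ⟨T, hTi, hsh'⟩
      · rw [hupd, Function.update_of_ne hki] at hck
        exact hC k ck hck hk
    · intro k ck hck hk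
      have hki : k ≠ i := by omega
      rw [hupd, Function.update_of_ne hki] at hck
      obtain ⟨Tk, hTk, cfTk, hrunk, h0k, hcank⟩ := hB k ck hck hk
      refine ⟨Tk, hTk, cfTk, ?_, h0k, hcank⟩
      refine viewPreserve prim Tk hrunk h0k hcank (hsep.1 k ck hck) ?_ heffalt
      have h : cf' k = some ck := by
        rw [hupd, Function.update_of_ne hki]; exact hck
      exact hsep'.1 k ck h

lemma master {sinit : Heap} {P Q : Program C} (hQ : Stateless prim sinit Q)
    (hinc : ∀ T ∈ P, Effects prim sinit (T :: starP Q) ⊆ Effects prim sinit (starP Q))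
    {st : Heap × Cf C}
    (hrun : ParSteps prim (sinit, cfInit (P ++ starP Q)) st) :
    MInv prim sinit P Q st.1 st.2 := by
  induction hrun with
  | refl =>
      refine ⟨Relation.ReflTransGen.refl,
        sep_allemp (fun i c hc => cfInit_emp hc), ?_, ?_⟩
      · intro i c hc hi
        have hc : cfInit (P ++ starP Q) i = some c := hc
        simp only [cfInit, Option.map_eq_some_iff] at hc
        obtain ⟨T', hT', rfl⟩ := hc
        rw [List.getElem?_append_right hi, starP, List.getElem?_map] at hT'
        simp only [Option.map_eq_some_iff] at hT'
        obtain ⟨T, hT, rfl⟩ := hT'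
        exact ⟨T, hT, Or.inl rfl⟩
      · intro i c hc hi
        have hc : cfInit (P ++ starP Q) i = some c := hc
        simp only [cfInit, Option.map_eq_some_iff] at hc
        obtain ⟨T', hT', rfl⟩ := hc
        rw [List.getElem?_append_left hi] at hT'
        refine ⟨T', hT', cfInit (T' :: starP Q), Relation.ReflTransGen.refl, ?_, fun j hj => rfl⟩
        show (((T' :: starP Q))[0]?).map (fun T => (T, emp)) = _
        rw [List.getElem?_cons_zero]
        rfl
  | tail hab hbc ih =>
      rename_i stb stc
      obtain ⟨s, cf⟩ := stb
      obtain ⟨s2, cf2⟩ := stc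
      exact (minv_step prim hQ hinc ih hbc).2
/-- Extension of a configuration of `P` to one of `P ∥ Q*`. -/
def extCf (P Q : Program C) (cf : Cf C) : Cf C :=
  fun i => if i < P.length then cf i else cfInit (P ++ starP Q) i

lemma extCf_pos {P Q : Program C} {cf : Cf C} {i : ℕ} (h : i < P.length) :
    extCf P Q cf i = cf i := if_pos h

lemma extCf_neg {P Q : Program C} {cf : Cf C} {i : ℕ} (h : ¬ i < P.length) :
    extCf P Q cf i = cfInit (P ++ starP Q) i := if_neg h

lemma extCf_init (P Q : Program C) : extCf P Q (cfInit P) = cfInit (P ++ starP Q) := by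
  funext i
  by_cases hi : i < P.length
  · rw [extCf_pos hi]
    show ((P)[i]?).map _ = ((P ++ starP Q)[i]?).map _
    rw [List.getElem?_append_left hi]
  · rw [extCf_neg hi]

lemma lift_step {P Q : Program C} {s s' : Heap} {cf cf' : Cf C}
    (hnone : ∀ i, P.length ≤ i → cf i = none)
    (h : ParStep prim (s, cf) (s', cf')) :
    ParStep prim (s, extCf P Q cf) (s', extCf P Q cf') := by
  obtain ⟨i, c, c', hci, hseq, hupd, hsep'⟩ := h
  replace hci : cf i = some c := hci
  replace hseq : SeqStep prim s c s' c' := hseq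
  replace hupd : cf' = Function.update cf i (some c') := hupd
  replace hsep' : Separated s' cf' := hsep'
  have hi : i < P.length := by
    by_contra hlt
    rw [hnone i (le_of_not_gt hlt)] at hci; cases hci
  refine ⟨i, c, c', ?_, hseq, ?_, ?_⟩
  · show extCf P Q cf i = some c
    rw [extCf_pos hi]; exact hci
  · show extCf P Q cf' = Function.update (extCf P Q cf) i (some c')
    funext j
    by_cases hji : j = i
    · subst hji
      rw [Function.update_self, extCf_pos hi, hupd, Function.update_self]
    · rw [Function.update_of_ne hji]
      by_cases hj : j < P.length
      · rw [extCf_pos hj, extCf_pos hj, hupd, Function.update_of_ne hji]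
      · rw [extCf_neg hj, extCf_neg hj]
  · show Separated s' (extCf P Q cf')
    constructor
    · intro k ck hck
      by_cases hk : k < P.length
      · rw [extCf_pos hk] at hck; exact hsep'.1 k ck hck
      · rw [extCf_neg hk] at hck
        rw [cfInit_emp hck]
        exact Disj_emp_right s'
    · intro k l ck cl hkl hck hcl
      by_cases hk : k < P.length
      · by_cases hl : l < P.length
        · rw [extCf_pos hk] at hck; rw [extCf_pos hl] at hcl
          exact hsep'.2 k l ck cl hkl hck hcl
        · rw [extCf_neg hl] at hcl
          rw [cfInit_emp hcl]
          exact Disj_emp_right _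
      · rw [extCf_neg hk] at hck
        rw [cfInit_emp hck]
        exact Disj_emp_left _

lemma lift_run {sinit : Heap} {P Q : Program C} {st : Heap × Cf C}
    (hrun : ParSteps prim (sinit, cfInit P) st) :
    (∀ i, P.length ≤ i → st.2 i = none) ∧
    ParSteps prim (sinit, cfInit (P ++ starP Q)) (st.1, extCf P Q st.2) := by
  induction hrun with
  | refl =>
      constructor
      · intro i hi
        show ((P)[i]?).map _ = none
        rw [List.getElem?_eq_none hi]
        rfl
      · rw [extCf_init]
        exact Relation.ReflTransGen.refl
  | tail hab hbc ih =>
      rename_i stb stc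
      obtain ⟨s, cf⟩ := stb
      obtain ⟨s2, cf2⟩ := stc
      obtain ⟨ihn, ihr⟩ := ih
      replace ihn : ∀ i, P.length ≤ i → cf i = none := ihn
      replace ihr : ParSteps prim (sinit, cfInit (P ++ starP Q)) (s, extCf P Q cf) := ihr
      obtain ⟨i, c, c', hci, hseq, hupd, hsep'⟩ := hbc
      replace hci : cf i = some c := hci
      replace hupd : cf2 = Function.update cf i (some c') := hupd
      have hi : i < P.length := by
        by_contra hlt
        rw [ihn i (le_of_not_gt hlt)] at hci; cases hci
      constructor
      · intro k hk
        show cf2 k = none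
        have hki : k ≠ i := by omega
        rw [hupd, Function.update_of_ne hki]
        exact ihn k hk
      · exact ihr.tail (lift_step prim ihn ⟨i, c, c', hci, hseq, hupd, hsep'⟩)

/-- Effect inclusion lifting. -/
theorem effect_inclusion_lifting
    (hps : PreservesSep prim)
    (sinit : Heap) (P Q : Program C) (hQ : Stateless prim sinit Q)
    (hinc : ∀ T ∈ P, Effects prim sinit (T :: starP Q) ⊆
              Effects prim sinit (starP Q)) :
    Effects prim sinit P ⊆ Effects prim sinit (P ++ starP Q) ∧
    Effects prim sinit (P ++ starP Q) ⊆ Effects prim sinit (starP Q) := by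
  constructor
  · rintro ⟨s, s'⟩ ⟨cf, cf', hrun, hstep⟩
    obtain ⟨hnone, hrun'⟩ := lift_run prim (Q := Q) hrun
    exact ⟨extCf P Q cf, extCf P Q cf', hrun', lift_step prim hnone hstep⟩
  · rintro ⟨s, s'⟩ ⟨cf, cf', hrun, hstep⟩
    exact (minv_step prim hQ hinc (master prim hQ hinc hrun) hstep).1

end Paper
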